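/- arXiv:2102.11746 — 2 statements merged into one kernel-verified Lean document; each statement's English description precedes it below -/
import Mathlib

section
/- Let G be a simple graph on a (possibly infinite) vertex set that is connected and acyclic and in which every vertex has exactly 3 neighbors, let v be a vertex of G and let w be a neighbor of v. Then for every integer k ≥ 1, the collection of k-element sets S of vertices with v ∈ S and w ∉ S whose induced subgraph is connected is finite, and its cardinality equals catalan(k). -/
/-!
Let `a`, `b` be the two neighbours of `v` other than `w`. In a tree, a subtree `S` through `v`
avoiding `w` is `{v}` together with its parts in the branches at `a` and at `b` seen from `v`, and
each part is either empty or a subtree through `a` (resp. `b`) avoiding `v`. Since every vertex has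
degree 3, the same splitting applies to the parts, so recursively `S` is described by a binary
tree with `|S|` nodes: the root stands for `v`, the left and right subtrees for the two parts.
Binary trees with `k` nodes are counted by `catalan k`.
-/

namespace SimpleGraph

variable {V : Type*} {G : SimpleGraph V}

/-- For adjacent `x` and `z` in a tree, the branch at `x` seen from `z`. -/
def branch (G : SimpleGraph V) (x z : V) : Set V := {u | ∃ p : G.Walk x u, z ∉ p.support}

section branch

variable {x y z u : V}

lemma mem_branch_left (h : x ≠ z) : x ∈ G.branch x z :=
  ⟨.nil, by simpa using h.symm⟩

lemma notMem_branch_right : z ∉ G.branch x z :=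
  fun ⟨p, hp⟩ => hp p.end_mem_support

lemma mem_branch_of_mem_support {p : G.Walk x u} (hz : z ∉ p.support) (hy : y ∈ p.support) :
    y ∈ G.branch x z := by
  classical
  exact ⟨p.takeUntil y hy, fun h => hz (p.support_takeUntil_subset_support hy h)⟩

lemma mem_branch_comm : u ∈ G.branch x z ↔ x ∈ G.branch u z :=
  ⟨fun ⟨p, hp⟩ => ⟨p.reverse, by simpa using hp⟩,
    fun ⟨p, hp⟩ => ⟨p.reverse, by simpa using hp⟩⟩

lemma branch_trans (hy : y ∈ G.branch x z) (hu : u ∈ G.branch y z) : u ∈ G.branch x z := by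
  obtain ⟨p, hp⟩ := hy
  obtain ⟨q, hq⟩ := hu
  exact ⟨p.append q, by simp [Walk.mem_support_append_iff, hp, hq]⟩

end branch

section IsAcyclic

variable {v w a b : V}

lemma IsAcyclic.notMem_branch (hG : G.IsAcyclic) (ha : G.Adj v a) (hb : G.Adj v b)
    (hab : a ≠ b) : b ∉ G.branch a v := by
  classical
  rintro ⟨p, hp⟩
  have hpath : (Walk.cons ha.symm (Walk.cons hb .nil)).IsPath := by simp [ha.ne', hb.ne, hab]
  have := (hG.subsingleton_path a b).elim ⟨p.bypass, p.bypass_isPath⟩ ⟨_, hpath⟩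
  exact hp (p.support_bypass_subset_support (by simpa using congrArg (v ∈ ·.1.support) this))

lemma IsAcyclic.disjoint_branch (hG : G.IsAcyclic) (ha : G.Adj v a) (hb : G.Adj v b)
    (hab : a ≠ b) : Disjoint (G.branch a v) (G.branch b v) :=
  Set.disjoint_left.2 fun _ hua hub =>
    hG.notMem_branch ha hb hab (branch_trans hua (mem_branch_comm.1 hub))

lemma IsAcyclic.branch_subset_branch (hG : G.IsAcyclic) (hvw : G.Adj v w) (hva : G.Adj v a)
    (haw : a ≠ w) : G.branch a v ⊆ G.branch v w := by
  rintro u ⟨p, hp⟩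
  refine ⟨.cons hva p, ?_⟩
  simp only [Walk.support_cons, List.mem_cons, not_or]
  exact ⟨hvw.ne', fun hw => hG.notMem_branch hva hvw haw (mem_branch_of_mem_support hp hw)⟩

lemma IsAcyclic.insert_union_inter_branch (hG : G.IsAcyclic) (ha : G.Adj v a) (hb : G.Adj v b)
    (hab : a ≠ b) {s t : Set V} (hs : s ⊆ G.branch a v) (ht : t ⊆ G.branch b v) :
    insert v (s ∪ t) ∩ G.branch a v = s := by
  ext u
  simp only [Set.mem_inter_iff, Set.mem_insert_iff, Set.mem_union]
  constructor
  · rintro ⟨rfl | hu | hu, hua⟩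
    · exact absurd hua notMem_branch_right
    · exact hu
    · exact absurd (ht hu) (Set.disjoint_left.1 (hG.disjoint_branch ha hb hab) hua)
  · exact fun hu => ⟨.inr (.inl hu), hs hu⟩

end IsAcyclic

lemma Walk.exists_adj_walk_notMem_support {v u : V} (p : G.Walk v u) (h : u ≠ v) :
    ∃ x, G.Adj v x ∧ ∃ q : G.Walk x u, v ∉ q.support ∧ q.support ⊆ p.support := by
  classical
  obtain ⟨x, hvx, q, hq⟩ := Walk.not_nil_iff.1 (Walk.not_nil_of_ne (p := p.bypass) h.symm)
  have hpath := p.bypass_isPath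
  rw [hq, Walk.cons_isPath_iff] at hpath
  have hsupp := p.support_bypass_subset_support
  rw [hq, Walk.support_cons] at hsupp
  exact ⟨x, hvx, q, hpath.2, List.Subset.trans (List.subset_cons_self _ _) hsupp⟩

/-- Unlike connectivity of `G.induce s`, this also holds for `s = ∅`, which models the empty
subtree. -/
def ConnectedFrom (G : SimpleGraph V) (c : V) (s : Set V) : Prop :=
  ∀ u ∈ s, ∃ p : G.Walk c u, ∀ y ∈ p.support, y ∈ s

section ConnectedFrom

variable {c v w a b u : V} {s t : Set V}

lemma connectedFrom_iff_connected_induce (hc : c ∈ s) :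
    G.ConnectedFrom c s ↔ (G.induce s).Connected := by
  constructor
  · intro h
    refine induce_connected_of_patches c hc fun {u} hu => ?_
    obtain ⟨p, hp⟩ := h u hu
    exact ⟨_, hp, p.start_mem_support, p.end_mem_support, p.connected_induce_support _ _⟩
  · intro h u hu
    obtain ⟨q⟩ := h.preconnected ⟨c, hc⟩ ⟨u, hu⟩
    refine ⟨q.map (Embedding.induce s).toHom, fun y hy => ?_⟩
    erw [Walk.support_map, List.mem_map] at hy
    obtain ⟨⟨y, hys⟩, -, rfl⟩ := hy
    exact hys

lemma ConnectedFrom.mem (h : G.ConnectedFrom c s) (hu : u ∈ s) : c ∈ s :=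
  let ⟨p, hp⟩ := h u hu
  hp c p.start_mem_support

lemma ConnectedFrom.union (hs : G.ConnectedFrom c s) (ht : G.ConnectedFrom c t) :
    G.ConnectedFrom c (s ∪ t) := by
  rintro u (hu | hu)
  · obtain ⟨p, hp⟩ := hs u hu
    exact ⟨p, fun y hy => .inl (hp y hy)⟩
  · obtain ⟨p, hp⟩ := ht u hu
    exact ⟨p, fun y hy => .inr (hp y hy)⟩

lemma ConnectedFrom.insert_of_adj (hs : G.ConnectedFrom c s) (h : G.Adj v c) :
    G.ConnectedFrom v (insert v s) := by
  rintro u (rfl | hu)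
  · exact ⟨.nil, by simp⟩
  · obtain ⟨p, hp⟩ := hs u hu
    refine ⟨.cons h p, ?_⟩
    simp only [Walk.support_cons, List.mem_cons]
    rintro y (rfl | hy)
    exacts [.inl rfl, .inr (hp y hy)]

lemma ConnectedFrom.eq_insert_union_inter_branch (hs : G.ConnectedFrom v s) (hv : v ∈ s)
    (hw : w ∉ s) (hab : G.neighborSet v \ {w} = {a, b}) :
    s = insert v (s ∩ G.branch a v ∪ s ∩ G.branch b v) := by
  refine subset_antisymm (fun u hu => ?_) (Set.insert_subset hv (by simp))
  rcases eq_or_ne u v with rfl | huv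
  · exact .inl rfl
  obtain ⟨p, hp⟩ := hs u hu
  obtain ⟨x, hvx, q, hvq, hqp⟩ := p.exists_adj_walk_notMem_support huv
  have hxs : x ∈ s := hp x (hqp q.start_mem_support)
  have hx : x ∈ G.neighborSet v \ {w} := ⟨hvx, fun hxw => hw (hxw ▸ hxs)⟩
  have hux : u ∈ G.branch x v := mem_branch_of_mem_support hvq q.end_mem_support
  rw [hab] at hx
  rcases hx with rfl | rfl
  exacts [.inr (.inl ⟨hu, hux⟩), .inr (.inr ⟨hu, hux⟩)]

lemma IsAcyclic.connectedFrom_inter_branch (hG : G.IsAcyclic) (hs : G.ConnectedFrom v s)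
    (hvc : G.Adj v c) : G.ConnectedFrom c (s ∩ G.branch c v) := by
  rintro u ⟨hus, huc⟩
  obtain ⟨p, hp⟩ := hs u hus
  obtain ⟨x, hvx, q, hvq, hqp⟩ :=
    p.exists_adj_walk_notMem_support fun huv => notMem_branch_right (huv ▸ huc)
  obtain rfl : x = c := by
    by_contra hxc
    exact hG.notMem_branch hvx hvc hxc
      (branch_trans (mem_branch_of_mem_support hvq q.end_mem_support) (mem_branch_comm.1 huc))
  exact ⟨q, fun y hy => ⟨hp y (hqp hy), mem_branch_of_mem_support hvq hy⟩⟩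

end ConnectedFrom

def IsOtherNeighbors (G : SimpleGraph V) (nb : V → V → V × V) : Prop :=
  ∀ ⦃x y⦄, G.Adj x y →
    (nb x y).1 ≠ (nb x y).2 ∧ G.neighborSet x \ {y} = {(nb x y).1, (nb x y).2}

section IsOtherNeighbors

variable {nb : V → V → V × V} {x y : V}

lemma IsOtherNeighbors.fst_mem (hnb : G.IsOtherNeighbors nb) (h : G.Adj x y) :
    (nb x y).1 ∈ G.neighborSet x \ {y} := by
  simp [(hnb h).2]

lemma IsOtherNeighbors.snd_mem (hnb : G.IsOtherNeighbors nb) (h : G.Adj x y) :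
    (nb x y).2 ∈ G.neighborSet x \ {y} := by
  simp [(hnb h).2]

lemma exists_isOtherNeighbors (hdeg : ∀ v, (G.neighborSet v).ncard = 3) :
    ∃ nb, G.IsOtherNeighbors nb := by
  have : ∀ x y, ∃ p : V × V, G.Adj x y →
      p.1 ≠ p.2 ∧ G.neighborSet x \ {y} = {p.1, p.2} := by
    intro x y
    by_cases hxy : G.Adj x y
    · have : (G.neighborSet x \ {y}).ncard = 2 := by
        rw [Set.ncard_sdiff_singleton_of_mem ((G.mem_neighborSet x y).2 hxy), hdeg x]
      obtain ⟨a, b, hab, hs⟩ := Set.ncard_eq_two.1 this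
      exact ⟨(a, b), fun _ => ⟨hab, hs⟩⟩
    · exact ⟨(x, x), fun h => absurd h hxy⟩
  choose nb hnb using this
  exact ⟨nb, fun x y => hnb x y⟩

end IsOtherNeighbors

variable [DecidableEq V] (nb : V → V → V × V)

/-- The vertex set of the subtree of shape `t` rooted at `v` and growing away from `w`. -/
def plant : V → V → BinaryTree Unit → Finset V
  | _, _, .nil => ∅
  | v, w, .node _ l r => insert v (plant (nb v w).1 v l ∪ plant (nb v w).2 v r)

variable {nb} {v w : V}

lemma self_mem_plant_iff {t : BinaryTree Unit} : v ∈ plant nb v w t ↔ t ≠ .nil := by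
  cases t <;> simp [plant]

lemma plant_eq_empty_iff {t : BinaryTree Unit} : plant nb v w t = ∅ ↔ t = .nil := by
  cases t <;> simp [plant]

lemma IsAcyclic.coe_plant_subset_branch (hG : G.IsAcyclic) (hnb : G.IsOtherNeighbors nb)
    (t : BinaryTree Unit) (hvw : G.Adj v w) :
    ↑(plant nb v w t) ⊆ G.branch v w := by
  induction t generalizing v w with
  | nil => simp [plant]
  | node _ l r ihl ihr =>
    obtain ⟨hva, haw⟩ := hnb.fst_mem hvw
    obtain ⟨hvb, hbw⟩ := hnb.snd_mem hvw
    simp only [plant, Finset.coe_insert, Finset.coe_union, Set.insert_subset_iff,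
      Set.union_subset_iff]
    exact ⟨mem_branch_left hvw.ne,
      (ihl hva.symm).trans (hG.branch_subset_branch hvw hva haw),
      (ihr hvb.symm).trans (hG.branch_subset_branch hvw hvb hbw)⟩

lemma IsAcyclic.notMem_plant (hG : G.IsAcyclic) (hnb : G.IsOtherNeighbors nb)
    (t : BinaryTree Unit) (hvw : G.Adj v w) : w ∉ plant nb v w t :=
  fun h => notMem_branch_right (hG.coe_plant_subset_branch hnb t hvw h)

lemma IsAcyclic.coe_plant_node_inter_branch_fst (hG : G.IsAcyclic)
    (hnb : G.IsOtherNeighbors nb) (hvw : G.Adj v w) (u : Unit) (l r : BinaryTree Unit) :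
    ↑(plant nb v w (.node u l r)) ∩ G.branch (nb v w).1 v = ↑(plant nb (nb v w).1 v l) := by
  rw [plant, Finset.coe_insert, Finset.coe_union]
  exact hG.insert_union_inter_branch (hnb.fst_mem hvw).1 (hnb.snd_mem hvw).1 (hnb hvw).1
    (hG.coe_plant_subset_branch hnb l (hnb.fst_mem hvw).1.symm)
    (hG.coe_plant_subset_branch hnb r (hnb.snd_mem hvw).1.symm)

lemma IsAcyclic.coe_plant_node_inter_branch_snd (hG : G.IsAcyclic)
    (hnb : G.IsOtherNeighbors nb) (hvw : G.Adj v w) (u : Unit) (l r : BinaryTree Unit) :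
    ↑(plant nb v w (.node u l r)) ∩ G.branch (nb v w).2 v = ↑(plant nb (nb v w).2 v r) := by
  rw [plant, Finset.coe_insert, Finset.coe_union, Set.union_comm]
  exact hG.insert_union_inter_branch (hnb.snd_mem hvw).1 (hnb.fst_mem hvw).1 (hnb hvw).1.symm
    (hG.coe_plant_subset_branch hnb r (hnb.snd_mem hvw).1.symm)
    (hG.coe_plant_subset_branch hnb l (hnb.fst_mem hvw).1.symm)

lemma IsAcyclic.card_plant (hG : G.IsAcyclic) (hnb : G.IsOtherNeighbors nb)
    (t : BinaryTree Unit) (hvw : G.Adj v w) : (plant nb v w t).card = t.numNodes := by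
  induction t generalizing v w with
  | nil => simp [plant]
  | node _ l r ihl ihr =>
    have hva := (hnb.fst_mem hvw).1
    have hvb := (hnb.snd_mem hvw).1
    have hdisj : Disjoint (plant nb (nb v w).1 v l) (plant nb (nb v w).2 v r) := by
      rw [← Finset.disjoint_coe]
      exact (hG.disjoint_branch hva hvb (hnb hvw).1).mono
        (hG.coe_plant_subset_branch hnb l hva.symm) (hG.coe_plant_subset_branch hnb r hvb.symm)
    have hv : v ∉ plant nb (nb v w).1 v l ∪ plant nb (nb v w).2 v r := by
      rw [Finset.mem_union, not_or]
      exact ⟨hG.notMem_plant hnb l hva.symm, hG.notMem_plant hnb r hvb.symm⟩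
    rw [plant, Finset.card_insert_of_notMem hv, Finset.card_union_of_disjoint hdisj,
      ihl hva.symm, ihr hvb.symm, BinaryTree.numNodes]

lemma IsAcyclic.plant_injective (hG : G.IsAcyclic) (hnb : G.IsOtherNeighbors nb)
    (hvw : G.Adj v w) : Function.Injective (plant nb v w) := by
  intro t₁ t₂ h
  induction t₁ generalizing v w t₂ with
  | nil => exact (plant_eq_empty_iff.1 h.symm).symm
  | node _ l₁ r₁ ihl ihr =>
    cases t₂ with
    | nil => exact plant_eq_empty_iff.1 h
    | node _ l₂ r₂ =>
      have hl := congrArg (fun s : Finset V => (s : Set V) ∩ G.branch (nb v w).1 v) h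
      have hr := congrArg (fun s : Finset V => (s : Set V) ∩ G.branch (nb v w).2 v) h
      simp only [hG.coe_plant_node_inter_branch_fst hnb hvw,
        hG.coe_plant_node_inter_branch_snd hnb hvw, Finset.coe_inj] at hl hr
      rw [ihl (hnb.fst_mem hvw).1.symm hl, ihr (hnb.snd_mem hvw).1.symm hr]

lemma IsOtherNeighbors.connectedFrom_plant (hnb : G.IsOtherNeighbors nb) (t : BinaryTree Unit)
    (hvw : G.Adj v w) : G.ConnectedFrom v ↑(plant nb v w t) := by
  induction t generalizing v w with
  | nil => simp [plant, ConnectedFrom]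
  | node _ l r ihl ihr =>
    have hva := (hnb.fst_mem hvw).1
    have hvb := (hnb.snd_mem hvw).1
    rw [plant, Finset.coe_insert, Finset.coe_union, Set.insert_union_distrib]
    exact ((ihl hva.symm).insert_of_adj hva).union ((ihr hvb.symm).insert_of_adj hvb)

lemma IsAcyclic.exists_plant_eq (hG : G.IsAcyclic) (hnb : G.IsOtherNeighbors nb)
    (S : Finset V) (hvw : G.Adj v w) (hw : w ∉ S) (hS : G.ConnectedFrom v ↑S) :
    ∃ t, plant nb v w t = S := by
  classical
  induction S using Finset.strongInduction generalizing v w with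
  | H S ih =>
    rcases S.eq_empty_or_nonempty with rfl | ⟨u, hu⟩
    · exact ⟨.nil, rfl⟩
    have hv : v ∈ S := hS.mem hu
    have hpiece : ∀ c ∈ G.neighborSet v \ {w},
        ∃ t, plant nb c v t = S.filter (· ∈ G.branch c v) := by
      rintro c ⟨hvc, -⟩
      refine ih _ (Finset.filter_ssubset.2 ⟨v, hv, notMem_branch_right⟩) hvc.symm
        (by simp [notMem_branch_right]) ?_
      rw [Finset.coe_filter]
      exact hG.connectedFrom_inter_branch hS hvc
    obtain ⟨l, hl⟩ := hpiece _ (hnb.fst_mem hvw)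
    obtain ⟨r, hr⟩ := hpiece _ (hnb.snd_mem hvw)
    refine ⟨.node () l r, Finset.coe_inj.1 ?_⟩
    rw [plant, hl, hr, Finset.coe_insert, Finset.coe_union, Finset.coe_filter, Finset.coe_filter]
    exact (hS.eq_insert_union_inter_branch hv hw (hnb hvw).2).symm

lemma IsAcyclic.image_plant (hG : G.IsAcyclic) (hnb : G.IsOtherNeighbors nb) (hvw : G.Adj v w)
    {k : ℕ} (hk : 1 ≤ k) :
    plant nb v w '' {t | t.numNodes = k} =
      {S : Finset V | v ∈ S ∧ w ∉ S ∧ S.card = k ∧ (G.induce (S : Set V)).Connected} := by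
  ext S
  constructor
  · rintro ⟨t, rfl, rfl⟩
    have hv : v ∈ plant nb v w t :=
      self_mem_plant_iff.2 (by rintro rfl; simp [BinaryTree.numNodes] at hk)
    exact ⟨hv, hG.notMem_plant hnb t hvw, hG.card_plant hnb t hvw,
      (connectedFrom_iff_connected_induce hv).1 (hnb.connectedFrom_plant t hvw)⟩
  · rintro ⟨hv, hw, rfl, hS⟩
    obtain ⟨t, rfl⟩ :=
      hG.exists_plant_eq hnb S hvw hw ((connectedFrom_iff_connected_induce hv).2 hS)
    exact ⟨t, (hG.card_plant hnb t hvw).symm, rfl⟩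

end SimpleGraph

theorem card_subtrees_through_vertex_avoiding_neighbor_general {V : Type*} (G : SimpleGraph V)
    (hacyc : G.IsAcyclic)
    (hdeg : ∀ v : V, (G.neighborSet v).ncard = 3)
    (v w : V) (hvw : G.Adj v w) (k : ℕ) (hk : 1 ≤ k) :
    {S : Finset V | v ∈ S ∧ w ∉ S ∧ S.card = k ∧ (G.induce (S : Set V)).Connected}.Finite ∧
    {S : Finset V | v ∈ S ∧ w ∉ S ∧ S.card = k ∧ (G.induce (S : Set V)).Connected}.ncard
      = catalan k := by
  classical
  obtain ⟨nb, hnb⟩ := SimpleGraph.exists_isOtherNeighbors hdeg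
  rw [← hacyc.image_plant hnb hvw hk, ← BinaryTree.coe_treesOfNumNodesEq]
  refine ⟨(Finset.finite_toSet _).image _, ?_⟩
  rw [Set.ncard_image_of_injective _ (hacyc.plant_injective hnb hvw), Set.ncard_coe_finset,
    BinaryTree.treesOfNumNodesEq_card_eq_catalan]

/-- In a connected acyclic graph in which every vertex has exactly 3 neighbours,
for a vertex `v`, a neighbour `w` of `v` and every `k ≥ 1`, the collection of
`k`-element vertex sets containing `v` but not `w` whose induced subgraph is
connected is finite, and has cardinality `catalan k`. -/
theorem card_subtrees_through_vertex_avoiding_neighbor {V : Type*} (G : SimpleGraph V)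
    (hconn : G.Connected) (hacyc : G.IsAcyclic)
    (hdeg : ∀ v : V, (G.neighborSet v).ncard = 3)
    (v w : V) (hvw : G.Adj v w) (k : ℕ) (hk : 1 ≤ k) :
    {S : Finset V | v ∈ S ∧ w ∉ S ∧ S.card = k ∧ (G.induce (S : Set V)).Connected}.Finite ∧
    {S : Finset V | v ∈ S ∧ w ∉ S ∧ S.card = k ∧ (G.induce (S : Set V)).Connected}.ncard
      = catalan k :=
  card_subtrees_through_vertex_avoiding_neighbor_general G hacyc hdeg v w hvw k hk
end

section
/- Let t ≥ 2 and let m₀, m₁, …, m_{t−2} be positive integers with m = m₀+m₁+⋯+m_{t−2}. Then Γ(m, t) ≥ Π_{i=0}^{t−3} binom(m_i + m_{i+1} − 1, m_i − 1). -/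
/-!
Count only the permitted sequences in which each value `i` occurs exactly `m i` times. Such a
sequence with values `≤ k + 1` arises from one with values `≤ k` by inserting, right after each of
the `m k` occurrences of `k`, a possibly empty block of copies of `k + 1`. The block sizes form a
weak composition of `m (k + 1)` into `m k` parts, and both the shorter sequence (delete the
`k + 1`s) and the composition can be read back. So each new value multiplies the count by at least
`multichoose (m k) (m (k + 1)) = C(m k + m (k + 1) - 1, m k - 1)`, starting from the single
sequence `0, …, 0`.
-/

/-- A list `γ` of natural numbers is a *permitted sequence* of parameters
(`γ.length`, `t`) if its first entry is `0`, each entry exceeds the previous one by at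
most `1`, and every entry is at most `t - 2`. -/
def PermittedSeq (t : ℕ) (γ : List ℕ) : Prop :=
  γ.head? = some 0 ∧ List.Chain' (fun a b => b ≤ a + 1) γ ∧ ∀ x ∈ γ, x ≤ t - 2

/-- `Γ(m, t)`: the number of permitted sequences of parameters `(m, t)`. -/
noncomputable def permittedCount (m t : ℕ) : ℕ :=
  {γ : List ℕ | γ.length = m ∧ PermittedSeq t γ}.ncard

open List

theorem List.replicate_append_inj {α : Type*} {x : α} {l l' : List α} (hl : l.head? ≠ some x)
    (hl' : l'.head? ≠ some x) :
    ∀ {c c' : ℕ}, replicate c x ++ l = replicate c' x ++ l' → c = c' ∧ l = l'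
  | 0, 0, h => ⟨rfl, h⟩
  | 0, _ + 1, h => by
    rw [replicate_zero, nil_append] at h
    simp [h, replicate_succ] at hl
  | _ + 1, 0, h => by
    rw [replicate_zero, nil_append] at h
    simp [← h, replicate_succ] at hl'
  | _ + 1, _ + 1, h => by
    simp only [replicate_succ, cons_append, cons.injEq, true_and] at h
    obtain ⟨rfl, rfl⟩ := replicate_append_inj hl hl' h
    exact ⟨rfl, rfl⟩

/-- Inserts, right after the `j`-th occurrence of `u` in `γ`, a block of `cs[j]` copies of `u + 1`
(no copies once `cs` runs out). -/
def insertBlocks (u : ℕ) : List ℕ → List ℕ → List ℕ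
  | [], _ => []
  | a :: γ, cs =>
      if a = u then a :: (replicate cs.headI (u + 1) ++ insertBlocks u γ cs.tail)
      else a :: insertBlocks u γ cs

section insertBlocks

variable (u : ℕ)

@[simp]
theorem head?_insertBlocks (γ cs : List ℕ) : (insertBlocks u γ cs).head? = γ.head? := by
  cases γ with
  | nil => rfl
  | cons a γ => simp only [insertBlocks]; split <;> rfl

theorem mem_insertBlocks {x : ℕ} {γ cs : List ℕ} (h : x ∈ insertBlocks u γ cs) :
    x ∈ γ ∨ x = u + 1 := by
  induction γ generalizing cs with
  | nil => simp [insertBlocks] at h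
  | cons a γ ih =>
    simp only [insertBlocks] at h
    split at h
    · simp only [mem_cons, mem_append, mem_replicate] at h
      rcases h with h | h | h
      · simp [h]
      · exact .inr h.2
      · exact (ih h).imp_left (mem_cons_of_mem a)
    · rcases mem_cons.mp h with h | h
      · simp [h]
      · exact (ih h).imp_left (mem_cons_of_mem a)

theorem isChain_insertBlocks {γ : List ℕ} (cs : List ℕ) (h : IsChain (fun a b => b ≤ a + 1) γ) :
    IsChain (fun a b => b ≤ a + 1) (insertBlocks u γ cs) := by
  induction γ generalizing cs with
  | nil => exact .nil
  | cons a γ ih =>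
    rw [isChain_cons] at h
    obtain ⟨hhead, htail⟩ := h
    simp only [insertBlocks]
    split
    · next hau =>
      subst hau
      rw [isChain_cons]
      refine ⟨?_, (isChain_replicate_of_rel _ (Nat.le_succ _)).append (ih cs.tail htail) ?_⟩
      · cases cs.headI <;> simp_all [replicate_succ]
      · intro x hx y hy
        rw [eq_of_mem_replicate (mem_of_mem_getLast? hx)]
        have := hhead y (by simpa using hy)
        omega
    · exact isChain_cons.mpr ⟨by simpa using hhead, ih cs htail⟩

theorem count_insertBlocks_of_ne {x : ℕ} (hx : x ≠ u + 1) (γ cs : List ℕ) :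
    (insertBlocks u γ cs).count x = γ.count x := by
  induction γ generalizing cs with
  | nil => rfl
  | cons a γ ih =>
    simp only [insertBlocks]
    split <;> simp [count_cons, count_replicate, Ne.symm hx, ih]

theorem count_insertBlocks_self {γ cs : List ℕ} (hγ : u + 1 ∉ γ) (hcs : cs.length = γ.count u) :
    (insertBlocks u γ cs).count (u + 1) = cs.sum := by
  induction γ generalizing cs with
  | nil => simp_all [insertBlocks]
  | cons a γ ih =>
    obtain ⟨hne, hγ⟩ := not_or.mp (mem_cons.not.mp hγ)
    simp only [insertBlocks]
    split
    · next hau =>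
      subst hau
      obtain ⟨c, cs, rfl⟩ := exists_cons_of_length_eq_add_one (by simpa using hcs)
      simp_all
    · simp_all [Ne.symm hne]

theorem filter_insertBlocks {γ : List ℕ} (cs : List ℕ) (hγ : u + 1 ∉ γ) :
    (insertBlocks u γ cs).filter (· ≠ u + 1) = γ := by
  induction γ generalizing cs with
  | nil => rfl
  | cons a γ ih =>
    obtain ⟨hne, hγ⟩ := not_or.mp (mem_cons.not.mp hγ)
    simp only [insertBlocks]
    split <;> simp_all [filter_append, Ne.symm hne]

theorem insertBlocks_inj_right {γ cs cs' : List ℕ} (hγ : u + 1 ∉ γ)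
    (hcs : cs.length = γ.count u) (hcs' : cs'.length = γ.count u)
    (h : insertBlocks u γ cs = insertBlocks u γ cs') : cs = cs' := by
  induction γ generalizing cs cs' with
  | nil => simp_all
  | cons a γ ih =>
    obtain ⟨-, hγ⟩ := not_or.mp (mem_cons.not.mp hγ)
    simp only [insertBlocks] at h
    split at h
    · next hau =>
      subst hau
      obtain ⟨c, cs, rfl⟩ := exists_cons_of_length_eq_add_one (by simpa using hcs)
      obtain ⟨c', cs', rfl⟩ := exists_cons_of_length_eq_add_one (by simpa using hcs')
      have hhead : ∀ r, (insertBlocks a γ r).head? ≠ some (a + 1) := fun r hr =>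
        hγ (mem_of_mem_head? ((head?_insertBlocks a γ r).symm.trans hr))
      simp only [headI_cons, tail_cons, cons.injEq, true_and] at h
      obtain ⟨rfl, htail⟩ := replicate_append_inj (hhead cs) (hhead cs') h
      rw [ih hγ (by simpa using hcs) (by simpa using hcs') htail]
    · next hau =>
      rw [count_cons_of_ne hau] at hcs hcs'
      exact ih hγ hcs hcs' (cons_injective h)

theorem insertBlocks_injOn :
    Set.InjOn (fun p : List ℕ × List ℕ => insertBlocks u p.1 p.2)
      {p | u + 1 ∉ p.1 ∧ p.2.length = p.1.count u} := by
  rintro ⟨γ, cs⟩ ⟨hγ, hcs⟩ ⟨γ', cs'⟩ ⟨hγ', hcs'⟩ h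
  dsimp only at hγ hcs hγ' hcs' h
  obtain rfl : γ = γ' := by
    rw [← filter_insertBlocks u cs hγ, ← filter_insertBlocks u cs' hγ']
    exact congrArg _ h
  rw [insertBlocks_inj_right u hγ hcs hcs' h]

end insertBlocks

theorem finite_length_eq_forall_le (n b : ℕ) :
    {l : List ℕ | l.length = n ∧ ∀ x ∈ l, x ≤ b}.Finite := by
  refine ((finite_length_eq (Fin (b + 1)) n).image (map Fin.val)).subset ?_
  rintro l ⟨hl, hb⟩
  lift l to List (Fin (b + 1)) using fun x hx => Nat.lt_succ_of_le (hb x hx)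
  exact ⟨l, by simpa using hl, rfl⟩

theorem multichoose_le_ncard_length_sum (n s : ℕ) :
    n.multichoose s ≤ {cs : List ℕ | cs.length = n ∧ cs.sum = s}.ncard := by
  have hfin : {cs : List ℕ | cs.length = n ∧ cs.sum = s}.Finite :=
    (finite_length_eq_forall_le n s).subset fun cs ⟨hn, hs⟩ =>
      ⟨hn, fun x hx => hs ▸ le_sum_of_mem hx⟩
  let f (σ : Sym (Fin n) s) : List ℕ := ofFn fun j => (σ : Multiset (Fin n)).count j
  have hf : Function.Injective f := fun σ σ' h =>
    Sym.coe_injective (Multiset.ext.mpr (congrFun (ofFn_inj.mp h)))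
  calc n.multichoose s = (Set.range f).ncard := by
        rw [Set.ncard_range_of_injective hf, Nat.card_eq_fintype_card,
          Sym.card_sym_fin_eq_multichoose]
    _ ≤ _ := by
      refine Set.ncard_le_ncard ?_ hfin
      rintro _ ⟨σ, rfl⟩
      refine ⟨length_ofFn, ?_⟩
      rw [sum_ofFn, Multiset.sum_count_eq_card fun a _ => Finset.mem_univ a, Sym.card_coe]

theorem length_eq_sum_count_of_forall_le {γ : List ℕ} {k : ℕ} (h : ∀ x ∈ γ, x ≤ k) :
    γ.length = ∑ i ∈ Finset.range (k + 1), γ.count i := by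
  rw [← Multiset.coe_card, ← Multiset.sum_count_eq_card (s := Finset.range (k + 1))]
  · simp only [Multiset.coe_count]
  · exact fun x hx => Finset.mem_range.mpr (Nat.lt_succ_of_le (h x hx))

theorem finite_permitted (n t : ℕ) : {γ : List ℕ | γ.length = n ∧ PermittedSeq t γ}.Finite :=
  (finite_length_eq_forall_le n (t - 2)).subset fun _ ⟨hn, hγ⟩ => ⟨hn, hγ.2.2⟩

/-- Permitted sequences with entries `≤ k` (the bound of `PermittedSeq (k + 2)`) in which each
value `i ≤ k` occurs exactly `m i` times. -/
def permittedSeqsWithCounts (k : ℕ) (m : ℕ → ℕ) : Set (List ℕ) :=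
  {γ | PermittedSeq (k + 2) γ ∧ ∀ i ≤ k, γ.count i = m i}

section permittedSeqsWithCounts

variable {k : ℕ} {m : ℕ → ℕ}

theorem permittedSeqsWithCounts_subset : permittedSeqsWithCounts k m ⊆
    {γ | γ.length = ∑ i ∈ Finset.range (k + 1), m i ∧ PermittedSeq (k + 2) γ} :=
  fun _ ⟨hγ, hcount⟩ => ⟨(length_eq_sum_count_of_forall_le hγ.2.2).trans
    (Finset.sum_congr rfl fun i hi => hcount i (Nat.lt_succ_iff.mp (Finset.mem_range.mp hi))), hγ⟩

theorem finite_permittedSeqsWithCounts : (permittedSeqsWithCounts k m).Finite :=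
  (finite_permitted _ _).subset permittedSeqsWithCounts_subset

theorem replicate_mem_permittedSeqsWithCounts_zero (h : 0 < m 0) :
    replicate (m 0) 0 ∈ permittedSeqsWithCounts 0 m := by
  obtain ⟨n, hn⟩ := Nat.exists_eq_add_of_lt h
  refine ⟨⟨by simp [hn, replicate_succ], isChain_replicate_of_rel _ (Nat.le_succ 0), ?_⟩, ?_⟩
  · simp +contextual [mem_replicate]
  · simp

theorem succ_notMem_of_mem_permittedSeqsWithCounts {γ : List ℕ}
    (hγ : γ ∈ permittedSeqsWithCounts k m) : k + 1 ∉ γ :=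
  fun h => by simpa using hγ.1.2.2 _ h

theorem insertBlocks_mem_permittedSeqsWithCounts {γ cs : List ℕ}
    (hγ : γ ∈ permittedSeqsWithCounts k m) (hlen : cs.length = m k) (hsum : cs.sum = m (k + 1)) :
    insertBlocks k γ cs ∈ permittedSeqsWithCounts (k + 1) m := by
  have hnot := succ_notMem_of_mem_permittedSeqsWithCounts hγ
  obtain ⟨⟨hhead, hchain, hle⟩, hcount⟩ := hγ
  refine ⟨⟨by simpa using hhead, isChain_insertBlocks k cs hchain, fun x hx => ?_⟩, fun i hi => ?_⟩
  · rcases mem_insertBlocks k hx with hx | rfl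
    · simpa using (hle x hx).trans (Nat.le_succ k)
    · simp
  · rcases (Nat.le_succ_iff.mp hi) with hi | rfl
    · rw [count_insertBlocks_of_ne k (by omega), hcount i hi]
    · rw [count_insertBlocks_self k hnot (by rw [hlen, hcount k le_rfl]), hsum]

theorem ncard_mul_multichoose_le :
    (permittedSeqsWithCounts k m).ncard * (m k).multichoose (m (k + 1)) ≤
      (permittedSeqsWithCounts (k + 1) m).ncard := by
  set C := {cs : List ℕ | cs.length = m k ∧ cs.sum = m (k + 1)}
  calc _ ≤ (permittedSeqsWithCounts k m).ncard * C.ncard :=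
        Nat.mul_le_mul_left _ (multichoose_le_ncard_length_sum _ _)
    _ = (permittedSeqsWithCounts k m ×ˢ C).ncard := Set.ncard_prod.symm
    _ ≤ _ := by
      have hsub : permittedSeqsWithCounts k m ×ˢ C ⊆
          {p | k + 1 ∉ p.1 ∧ p.2.length = p.1.count k} := fun _ ⟨hγ, hcs⟩ =>
        ⟨succ_notMem_of_mem_permittedSeqsWithCounts hγ, by rw [hcs.1, hγ.2 k le_rfl]⟩
      exact Set.ncard_le_ncard_of_injOn _
        (fun _ ⟨hγ, hcs⟩ => insertBlocks_mem_permittedSeqsWithCounts hγ hcs.1 hcs.2)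
        ((insertBlocks_injOn k).mono hsub) finite_permittedSeqsWithCounts

theorem prod_multichoose_le_ncard (h0 : 0 < m 0) : ∀ k,
    ∏ i ∈ Finset.range k, (m i).multichoose (m (i + 1)) ≤ (permittedSeqsWithCounts k m).ncard
  | 0 => (Set.ncard_pos finite_permittedSeqsWithCounts).mpr
      ⟨_, replicate_mem_permittedSeqsWithCounts_zero h0⟩
  | k + 1 => by
    rw [Finset.prod_range_succ]
    exact (Nat.mul_le_mul_right _ (prod_multichoose_le_ncard h0 k)).trans ncard_mul_multichoose_le

end permittedSeqsWithCounts

/-- For `t ≥ 2` and positive multiplicities `m 0, …, m (t-2)` summing to `m`,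
`Γ(m, t) ≥ ∏_{i=0}^{t-3} C(m i + m (i+1) - 1, m i - 1)`. -/
theorem permittedCount_ge_prod (t : ℕ) (ht : 2 ≤ t)
    (m : ℕ → ℕ) (hm : ∀ i, i + 2 ≤ t → 0 < m i) :
    ∏ i ∈ Finset.range (t - 2), Nat.choose (m i + m (i + 1) - 1) (m i - 1)
      ≤ permittedCount (∑ i ∈ Finset.range (t - 1), m i) t := by
  obtain ⟨k, rfl⟩ : ∃ k, t = k + 2 := ⟨t - 2, by omega⟩
  have hchoose : ∀ i ∈ Finset.range k,
      (m i + m (i + 1) - 1).choose (m i - 1) = (m i).multichoose (m (i + 1)) := fun i hi => by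
    have := hm i (by have := Finset.mem_range.mp hi; omega)
    rw [Nat.multichoose_eq]
    exact Nat.choose_symm_of_eq_add (by omega)
  calc _ = ∏ i ∈ Finset.range k, (m i).multichoose (m (i + 1)) := Finset.prod_congr rfl hchoose
    _ ≤ (permittedSeqsWithCounts k m).ncard := prod_multichoose_le_ncard (hm 0 (by omega)) k
    _ ≤ _ := Set.ncard_le_ncard permittedSeqsWithCounts_subset (finite_permitted _ _)
end
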